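/- arXiv:2509.05242 — 4 statements merged into one kernel-verified Lean document; each statement's English description precedes it below -/
import Mathlib

section
/- If G is a finite group that is a subdirect product of finitely many anabelian finite groups (i.e., G embeds in a direct product of anabelian groups with surjective projections onto each factor), then G is anabelian, i.e., every composition factor of G is non-abelian. -/
/-- A subgroup `H ≤ G` is subnormal if there is a chain `H = H₀ ⊴ H₁ ⊴ ⋯ ⊴ Hₖ = G`. -/
def IsSubnormal {G : Type*} [Group G] (H : Subgroup G) : Prop :=
  ∃ (n : ℕ) (c : Fin (n + 1) → Subgroup G), c 0 = H ∧ c (Fin.last n) = ⊤ ∧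
    ∀ i : Fin n, c i.castSucc ≤ c i.succ ∧
      ((c i.castSucc).subgroupOf (c i.succ)).Normal

/-- A group is anabelian if all of its composition factors are non-abelian:
every simple quotient of a subnormal subgroup is non-abelian. -/
def IsAnabelian (G : Type*) [Group G] : Prop :=
  ∀ (H : Subgroup G) (N : Subgroup H) (hN : N.Normal), IsSubnormal H →
    letI := hN
    IsSimpleGroup (H ⧸ N) → ¬ (∀ a b : H ⧸ N, a * b = b * a)

/-!
A finite group is anabelian exactly when all its subnormal subgroups are perfect: a finite
non-perfect group has an abelian simple quotient, namely its quotient by a maximal subgroup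
containing the commutator subgroup.

Let `S` be subnormal in the subdirect product and `N` the intersection of the kernels of some of
the projections. Then `S ⊓ N` is subnormal, so its image in a further factor `Hᵢ` is subnormal,
hence perfect, and `S ⊓ N ≤ ⁅S, S⁆ ⊔ ker πᵢ`. With the Dedekind law for normal subgroups this
turns `S ≤ ⁅S, S⁆ ⊔ N` into `S ≤ ⁅S, S⁆ ⊔ (ker πᵢ ⊓ N)`. Adding all factors one at a time gives
`S ≤ ⁅S, S⁆ ⊔ ker f = ⁅S, S⁆`.
-/

section

open Group

variable {G : Type*} [Group G]

theorem isSubnormal_iff_subgroup_isSubnormal {H : Subgroup G} :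
    IsSubnormal H ↔ H.IsSubnormal := by
  constructor
  · rintro ⟨n, c, rfl, hlast, hc⟩
    induction n with
    | zero => rw [← Fin.last_zero, hlast]; exact .top
    | succ n ih =>
      have hc1 : (c 1).IsSubnormal :=
        ih (fun i => c i.succ) hlast fun i => by simpa using hc i.succ
      exact .step _ _ (hc 0).1 (by simpa using hc1) (hc 0).2
  · intro h
    induction h with
    | top => exact ⟨0, fun _ => ⊤, rfl, rfl, fun i => i.elim0⟩
    | step H K hle _ hN ih =>
      obtain ⟨n, c, rfl, hlast, hc⟩ := ih
      exact ⟨n + 1, Fin.cons H c, rfl, by simpa using hlast, Fin.cases ⟨hle, hN⟩ hc⟩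

theorem isAnabelian_of_forall_isPerfect (h : ∀ S : Subgroup G, S.IsSubnormal → IsPerfect S) :
    IsAnabelian G := by
  intro S N hN hS _ hcomm
  have := h S (isSubnormal_iff_subgroup_isSubnormal.mp hS)
  exact IsPerfect.not_isMulCommutative (S ⧸ N) ⟨⟨hcomm⟩⟩

theorem exists_isSimpleGroup_quotient_of_not_isPerfect [Finite G] (h : ¬ IsPerfect G) :
    ∃ (N : Subgroup G) (_ : N.Normal), IsSimpleGroup (G ⧸ N) ∧ ∀ a b : G ⧸ N, a * b = b * a := by
  obtain ⟨M, hM, hle⟩ :=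
    (eq_top_or_exists_le_coatom (commutator G)).resolve_left (mt isPerfect_def.mpr h)
  have hMn : M.Normal := .of_commutator_le (h := hle)
  have e : Subgroup (G ⧸ M) ≃o Set.Ici M := QuotientGroup.comapMk'OrderIso M
  have : IsSimpleOrder (Subgroup (G ⧸ M)) :=
    e.isSimpleOrder_iff.mpr (Set.isSimpleOrder_Ici_iff_isCoatom.mpr hM)
  have : Nontrivial (G ⧸ M) := Subgroup.nontrivial_iff.mp inferInstance
  exact ⟨M, hMn, ⟨fun N _ => IsSimpleOrder.eq_bot_or_eq_top N⟩,
    (Subgroup.Normal.quotient_commutative_iff_commutator_le.mpr hle).is_comm.comm⟩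

theorem IsAnabelian.isPerfect [Finite G] (hG : IsAnabelian G) {S : Subgroup G}
    (hS : S.IsSubnormal) : IsPerfect S := by
  by_contra h
  obtain ⟨N, hN, hsimple, hcomm⟩ := exists_isSimpleGroup_quotient_of_not_isPerfect h
  exact hG S N hN (isSubnormal_iff_subgroup_isSubnormal.mpr hS) hsimple hcomm

open scoped Pointwise in
theorem Subgroup.sup_inf_assoc_of_le_of_normal {A C : Subgroup G} (N : Subgroup G) [N.Normal]
    (h : A ≤ C) : (A ⊔ N) ⊓ C = A ⊔ N ⊓ C := by
  refine le_antisymm (fun x hx => ?_)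
    (le_inf (sup_le_sup_left inf_le_left _) (sup_le h inf_le_right))
  have hx' : x ∈ (A : Set G) * ↑(N ⊓ C) := by
    rw [Subgroup.mul_inf_assoc _ _ _ h, ← Subgroup.mul_normal]
    exact hx
  obtain ⟨a, ha, n, hn, rfl⟩ := hx'
  exact Subgroup.mul_mem_sup ha hn

theorem Subgroup.le_commutator_sup_ker_of_isPerfect_map {Q : Type*} [Group Q] (φ : G →* Q)
    (S : Subgroup G) [IsPerfect (S.map φ)] : S ≤ ⁅S, S⁆ ⊔ φ.ker :=
  calc S ≤ (S.map φ).comap φ := Subgroup.le_comap_map φ S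
    _ = (⁅S, S⁆.map φ).comap φ := by rw [Subgroup.map_commutator, Subgroup.commutator_eq_self]
    _ = ⁅S, S⁆ ⊔ φ.ker := Subgroup.comap_map_eq φ _

theorem Subgroup.le_commutator_sup_inf {S N K : Subgroup G} [N.Normal] [K.Normal]
    (hS : S ≤ ⁅S, S⁆ ⊔ N) (hSN : S ⊓ N ≤ ⁅S ⊓ N, S ⊓ N⁆ ⊔ K) : S ≤ ⁅S, S⁆ ⊔ K ⊓ N := by
  have hT : S ⊓ N ≤ ⁅S, S⁆ ⊔ K ⊓ N :=
    calc S ⊓ N ≤ (⁅S ⊓ N, S ⊓ N⁆ ⊔ K) ⊓ N := le_inf hSN inf_le_right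
      _ = ⁅S ⊓ N, S ⊓ N⁆ ⊔ K ⊓ N :=
        sup_inf_assoc_of_le_of_normal K ((commutator_le_self _).trans inf_le_right)
      _ ≤ ⁅S, S⁆ ⊔ K ⊓ N := sup_le_sup_right (commutator_mono inf_le_left inf_le_left) _
  calc S ≤ (⁅S, S⁆ ⊔ N) ⊓ S := le_inf hS le_rfl
    _ = ⁅S, S⁆ ⊔ N ⊓ S := sup_inf_assoc_of_le_of_normal N (commutator_le_self S)
    _ ≤ ⁅S, S⁆ ⊔ K ⊓ N := sup_le le_sup_left (inf_comm N S ▸ hT)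

theorem Subgroup.IsSubnormal.le_commutator_sup_iInf_ker {ι : Type*} {Q : ι → Type*}
    [∀ i, Group (Q i)] (hQ : ∀ i (T : Subgroup (Q i)), T.IsSubnormal → IsPerfect T)
    {φ : ∀ i, G →* Q i} (hφ : ∀ i, Function.Surjective (φ i)) (s : Finset ι)
    {S : Subgroup G} (hS : S.IsSubnormal) : S ≤ ⁅S, S⁆ ⊔ ⨅ i ∈ s, (φ i).ker := by
  classical
  induction s using Finset.induction_on with
  | empty => simp
  | insert a s _ ih =>
    have hN : (⨅ i ∈ s, (φ i).ker).Normal :=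
      Subgroup.normal_iInf_normal fun i => Subgroup.normal_iInf_normal fun _ => (φ i).normal_ker
    have := hQ a _ ((hS.inf hN.isSubnormal).map (hφ a))
    rw [Finset.iInf_insert]
    exact Subgroup.le_commutator_sup_inf ih (Subgroup.le_commutator_sup_ker_of_isPerfect_map _ _)

end

theorem subdirect_product_anabelian_general {t : ℕ} (H : Fin t → Type*)
    [∀ i, Group (H i)] [∀ i, Finite (H i)] (hH : ∀ i, IsAnabelian (H i))
    (G : Type*) [Group G] (f : G →* ∀ i, H i)
    (hinj : Function.Injective f)
    (hsurj : ∀ i, Function.Surjective ((Pi.evalMonoidHom H i).comp f)) :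
    IsAnabelian G := by
  have hker : ⨅ i ∈ Finset.univ, ((Pi.evalMonoidHom H i).comp f).ker = ⊥ := by
    refine eq_bot_iff.mpr fun x hx => hinj ?_
    simp only [Finset.mem_univ, iInf_pos, Subgroup.mem_iInf, MonoidHom.mem_ker] at hx
    exact funext fun i => (hx i).trans (congrFun (map_one f) i).symm
  refine isAnabelian_of_forall_isPerfect fun S hS => Subgroup.isPerfect_iff.mpr ?_
  have hS' := hS.le_commutator_sup_iInf_ker (fun i T hT => (hH i).isPerfect hT) hsurj .univ
  rw [hker, sup_bot_eq] at hS'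
  exact (Subgroup.commutator_le_self S).antisymm hS'

/-- A finite subdirect product of anabelian finite groups is anabelian. -/
theorem subdirect_product_anabelian {t : ℕ} (H : Fin t → Type*)
    [∀ i, Group (H i)] [∀ i, Finite (H i)] (hH : ∀ i, IsAnabelian (H i))
    (G : Type*) [Group G] [Finite G] (f : G →* ∀ i, H i)
    (hinj : Function.Injective f)
    (hsurj : ∀ i, Function.Surjective ((Pi.evalMonoidHom H i).comp f)) :
    IsAnabelian G :=
  subdirect_product_anabelian_general H hH G f hinj hsurj
end

section
/- Let G_1, ..., G_t be pairwise non-isomorphic finite simple non-abelian groups, and let G = G_1^{n_1} × ... × G_t^{n_t}. Then G is generated by d elements if and only if each G_m^{n_m} is generated by d elements, for 1 ≤ m ≤ t. -/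
/-!
Let `H` be a subgroup of `∏ Pᵢ` projecting onto every factor, where no two factors have a common
simple quotient. Splitting off one factor, `∏ Pᵢ = P₀ × B`, Goursat's lemma gives
`P₀ ⧸ N₀ ≃* B ⧸ N_B` with `N₀ = H ∩ P₀` and `N_B = H ∩ B`. Every simple quotient of `B` is one of a
single factor, so this quotient is trivial, `H` contains `P₀ × B`, and by induction `H = ⊤`.
Applied to the subgroup generated by the tuples `(gᵢₖ)ᵢ` built from `d` generators `gᵢₖ` of each
factor, this shows that the product is `d`-generated once every factor is. A simple quotient of a
power `Gᵐ` of a simple group is isomorphic to `G`, so powers of pairwise non-isomorphic simple groups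
have no common simple quotient.
-/

open Function Subgroup

universe u v

/-- `G` is generated by `d` elements. -/
def GeneratedBy (G : Type*) [Group G] (d : ℕ) : Prop :=
  ∃ S : Finset G, S.card ≤ d ∧ Subgroup.closure (S : Set G) = ⊤

theorem generatedBy_iff_exists_closure_range {G : Type*} [Group G] {d : ℕ} :
    GeneratedBy G d ↔ ∃ g : Fin d → G, closure (Set.range g) = ⊤ := by
  classical
  constructor
  · rintro ⟨S, hcard, hS⟩
    let g : Fin d → G := fun k => S.toList.getD k 1
    refine ⟨g, eq_top_iff.mpr (hS ▸ closure_mono fun x hx => ?_)⟩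
    obtain ⟨k, hk, rfl⟩ := List.getElem_of_mem (Finset.mem_toList.mpr hx)
    exact ⟨⟨k, hk.trans_le (S.length_toList ▸ hcard)⟩, List.getD_eq_getElem _ _ hk⟩
  · rintro ⟨g, hg⟩
    refine ⟨Finset.univ.image g, Finset.card_image_le.trans (Finset.card_fin d).le, ?_⟩
    rwa [Finset.coe_image, Finset.coe_univ, Set.image_univ]

theorem GeneratedBy.of_surjective {G H : Type*} [Group G] [Group H] {d : ℕ} (h : GeneratedBy G d)
    (f : G →* H) (hf : Surjective f) : GeneratedBy H d := by
  obtain ⟨g, hg⟩ := generatedBy_iff_exists_closure_range.mp h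
  refine generatedBy_iff_exists_closure_range.mpr ⟨f ∘ g, ?_⟩
  rw [Set.range_comp, ← MonoidHom.map_closure, hg, map_top_of_surjective f hf]

theorem generatedBy_pi_iff {ι : Type*} {P : ι → Type*} [∀ i, Group (P i)] {d : ℕ}
    (hsubdirect : ∀ H : Subgroup (∀ i, P i), (∀ i, H.map (Pi.evalMonoidHom P i) = ⊤) → H = ⊤) :
    GeneratedBy (∀ i, P i) d ↔ ∀ i, GeneratedBy (P i) d := by
  classical
  refine ⟨fun h i => h.of_surjective (Pi.evalMonoidHom P i) fun x =>
    ⟨Pi.mulSingle i x, Pi.mulSingle_eq_same i x⟩, fun h => ?_⟩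
  choose g hg using fun i => generatedBy_iff_exists_closure_range.mp (h i)
  refine generatedBy_iff_exists_closure_range.mpr ⟨fun k i => g i k, hsubdirect _ fun i => ?_⟩
  rw [MonoidHom.map_closure, ← Set.range_comp]
  exact hg i

theorem MonoidHom.normal_range_mulSingle {ι : Type*} [DecidableEq ι] (P : ι → Type*)
    [∀ i, Group (P i)] (i : ι) : (MonoidHom.mulSingle P i).range.Normal := by
  constructor
  rintro _ ⟨x, rfl⟩ z
  refine ⟨z i * x * (z i)⁻¹, funext fun j => ?_⟩
  rcases eq_or_ne j i with rfl | hji <;> simp [*]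

theorem MonoidHom.exists_surjective_comp_mulSingle {ι : Type*} [Finite ι] [DecidableEq ι]
    {P : ι → Type*} [∀ i, Group (P i)] {Q : Type*} [Group Q] [IsSimpleGroup Q]
    (q : (∀ i, P i) →* Q) (hq : Surjective q) :
    ∃ i, Surjective (q.comp (MonoidHom.mulSingle P i)) := by
  by_contra! hnot
  have hbot : ∀ i, (q.comp (MonoidHom.mulSingle P i)).range = ⊥ := fun i => by
    have hnormal := (MonoidHom.normal_range_mulSingle P i).map q hq
    rw [← MonoidHom.range_comp] at hnormal
    exact hnormal.eq_bot_or_eq_top.resolve_right (mt MonoidHom.range_eq_top.mp (hnot i))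
  have hker : q.ker = ⊤ := eq_top_iff.mpr fun x _ =>
    pi_mem_of_mulSingle_mem x fun i => by
      have hx : q (Pi.mulSingle i (x i)) ∈ (q.comp (MonoidHom.mulSingle P i)).range :=
        ⟨x i, rfl⟩
      simpa [hbot i] using hx
  obtain ⟨y, hy⟩ := exists_ne (1 : Q)
  obtain ⟨x, rfl⟩ := hq y
  exact hy (q.mem_ker.mp (hker ▸ mem_top x))

theorem IsSimpleGroup.injective_of_surjective {G Q : Type*} [Group G] [Group Q] [IsSimpleGroup G]
    [Nontrivial Q] (f : G →* Q) (hf : Surjective f) : Injective f := by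
  refine f.ker_eq_bot_iff.mp (f.normal_ker.eq_bot_or_eq_top.resolve_right fun hker => ?_)
  obtain ⟨y, hy⟩ := exists_ne (1 : Q)
  obtain ⟨x, rfl⟩ := hf y
  exact hy (f.mem_ker.mp (hker ▸ mem_top x))

theorem exists_surjective_isSimpleGroup (G : Type u) [Group G] [Finite G] [Nontrivial G] :
    ∃ (S : Type u) (_ : Group S) (_ : IsSimpleGroup S) (f : G →* S), Surjective f := by
  induction hcard : Nat.card G using Nat.strong_induction_on generalizing G with
  | _ n ih =>
  by_cases hsimple : IsSimpleGroup G
  · exact ⟨G, _, hsimple, MonoidHom.id G, surjective_id⟩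
  obtain ⟨N, hN, hbot, htop⟩ : ∃ N : Subgroup G, N.Normal ∧ N ≠ ⊥ ∧ N ≠ ⊤ := by
    by_contra! h
    exact hsimple ⟨fun N hN => or_iff_not_imp_left.mpr (h N hN)⟩
  have : Nontrivial (G ⧸ N) := QuotientGroup.nontrivial_iff.mpr htop
  have hlt : Nat.card (G ⧸ N) < n := by
    rw [← hcard, N.card_eq_card_quotient_mul_card_subgroup]
    exact lt_mul_of_one_lt_right Nat.card_pos (N.one_lt_card_iff_ne_bot.mpr hbot)
  obtain ⟨S, _, hS, f, hf⟩ := ih _ hlt (G ⧸ N) rfl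
  exact ⟨S, _, hS, f.comp (QuotientGroup.mk' N), hf.comp (QuotientGroup.mk'_surjective N)⟩

def HasCommonSimpleQuotient (A : Type u) (B : Type v) [Group A] [Group B] : Prop :=
  ∃ (Q : Type u) (_ : Group Q) (_ : IsSimpleGroup Q) (f : A →* Q) (g : B →* Q),
    Surjective f ∧ Surjective g

theorem HasCommonSimpleQuotient.exists_pi_right {A : Type u} [Group A] {ι : Type*} [Finite ι]
    {P : ι → Type v} [∀ i, Group (P i)] (h : HasCommonSimpleQuotient A (∀ i, P i)) :
    ∃ i, HasCommonSimpleQuotient A (P i) := by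
  classical
  obtain ⟨Q, _, _, f, g, hf, hg⟩ := h
  obtain ⟨i, hi⟩ := g.exists_surjective_comp_mulSingle hg
  exact ⟨i, Q, _, ‹_›, f, _, hf, hi⟩

theorem IsSimpleGroup.nonempty_mulEquiv_of_surjective_pi {ι G Q : Type*} [Finite ι] [Group G]
    [IsSimpleGroup G] [Group Q] [IsSimpleGroup Q] (q : (ι → G) →* Q) (hq : Surjective q) :
    Nonempty (G ≃* Q) := by
  classical
  obtain ⟨i, hi⟩ := q.exists_surjective_comp_mulSingle hq
  exact ⟨MulEquiv.ofBijective _ ⟨injective_of_surjective _ hi, hi⟩⟩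

theorem HasCommonSimpleQuotient.nonempty_mulEquiv_pi {ι κ G H : Type*} [Finite ι] [Finite κ]
    [Group G] [Group H] [IsSimpleGroup G] [IsSimpleGroup H]
    (h : HasCommonSimpleQuotient (ι → G) (κ → H)) : Nonempty (G ≃* H) := by
  obtain ⟨Q, _, _, f, g, hf, hg⟩ := h
  obtain ⟨eG⟩ := IsSimpleGroup.nonempty_mulEquiv_of_surjective_pi f hf
  obtain ⟨eH⟩ := IsSimpleGroup.nonempty_mulEquiv_of_surjective_pi g hg
  exact ⟨eG.trans eH.symm⟩

theorem Subgroup.eq_top_of_map_fst_of_map_snd {A : Type u} {B : Type v} [Group A] [Group B]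
    [Finite A] (hAB : ¬ HasCommonSimpleQuotient A B) {H : Subgroup (A × B)}
    (hfst : H.map (MonoidHom.fst A B) = ⊤) (hsnd : H.map (MonoidHom.snd A B) = ⊤) : H = ⊤ := by
  have h₁ : Surjective (Prod.fst ∘ H.subtype) := by
    rw [← MonoidHom.coe_fst, ← MonoidHom.coe_comp, ← MonoidHom.range_eq_top,
      MonoidHom.range_comp, range_subtype, hfst]
  have h₂ : Surjective (Prod.snd ∘ H.subtype) := by
    rw [← MonoidHom.coe_snd, ← MonoidHom.coe_comp, ← MonoidHom.range_eq_top,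
      MonoidHom.range_comp, range_subtype, hsnd]
  have := normal_goursatFst h₁
  have := normal_goursatSnd h₂
  obtain ⟨e, -⟩ := goursat_surjective h₁ h₂
  have hA : H.goursatFst = ⊤ := by
    by_contra hne
    have := QuotientGroup.nontrivial_iff.mpr hne
    obtain ⟨Q, _, hQ, f, hf⟩ := exists_surjective_isSimpleGroup (A ⧸ H.goursatFst)
    exact hAB ⟨Q, _, hQ, f.comp (QuotientGroup.mk' _),
      (f.comp e.symm.toMonoidHom).comp (QuotientGroup.mk' _),
      hf.comp (QuotientGroup.mk'_surjective _),
      (hf.comp e.symm.surjective).comp (QuotientGroup.mk'_surjective _)⟩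
  have hB : H.goursatSnd = ⊤ := by
    have : Subsingleton (A ⧸ H.goursatFst) := QuotientGroup.subsingleton_iff.mpr hA
    exact QuotientGroup.subsingleton_iff.mp e.symm.injective.subsingleton
  simpa [hA, hB] using goursatFst_prod_goursatSnd_le H

theorem Subgroup.eq_top_of_forall_map_eval {t : ℕ} {P : Fin t → Type u} [∀ i, Group (P i)]
    [∀ i, Finite (P i)] (hP : Pairwise fun i j => ¬ HasCommonSimpleQuotient (P i) (P j))
    {H : Subgroup (∀ i, P i)} (hH : ∀ i, H.map (Pi.evalMonoidHom P i) = ⊤) : H = ⊤ := by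
  induction t with
  | zero => exact Subsingleton.elim _ _
  | succ t ih =>
    let φ : (∀ i, P i) →* P 0 × ∀ i : Fin t, P i.succ :=
      (Pi.evalMonoidHom P 0).prod (MonoidHom.pi fun i => Pi.evalMonoidHom P i.succ)
    have hφ : Injective φ := fun x y hxy =>
      funext (Fin.cases (congrArg Prod.fst hxy) fun i => congrFun (congrArg Prod.snd hxy) i)
    have hcoprime : ¬ HasCommonSimpleQuotient (P 0) (∀ i : Fin t, P i.succ) := fun h => by
      obtain ⟨i, hi⟩ := h.exists_pi_right
      exact hP (Fin.succ_ne_zero i).symm hi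
    have hfst : (H.map φ).map (MonoidHom.fst _ _) = ⊤ := by
      rw [map_map]
      exact hH 0
    have hsnd : (H.map φ).map (MonoidHom.snd _ _) = ⊤ := by
      refine ih (fun i j hij => hP ((Fin.succ_injective t).ne hij)) fun i => ?_
      rw [map_map, map_map]
      exact hH i.succ
    rw [← comap_map_eq_self_of_injective hφ H, eq_top_of_map_fst_of_map_snd hcoprime hfst hsnd,
      comap_top]

theorem product_powers_generated_general {t : ℕ} (G : Fin t → Type*)
    [∀ i, Group (G i)] [∀ i, Finite (G i)] [∀ i, IsSimpleGroup (G i)]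
    (hpair : ∀ i j, i ≠ j → IsEmpty (G i ≃* G j))
    (n : Fin t → ℕ) (d : ℕ) :
    GeneratedBy (∀ i, Fin (n i) → G i) d ↔
      ∀ i, GeneratedBy (Fin (n i) → G i) d :=
  generatedBy_pi_iff fun _ => eq_top_of_forall_map_eval fun i j hij h =>
    (hpair i j hij).false h.nonempty_mulEquiv_pi.some

/-- A product of powers of pairwise non-isomorphic non-abelian finite simple
groups is d-generated iff each power is. -/
theorem product_powers_generated {t : ℕ} (G : Fin t → Type*)
    [∀ i, Group (G i)] [∀ i, Finite (G i)] [∀ i, IsSimpleGroup (G i)]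
    (hnonab : ∀ i, ¬ ∀ a b : G i, a * b = b * a)
    (hpair : ∀ i j, i ≠ j → IsEmpty (G i ≃* G j))
    (n : Fin t → ℕ) (d : ℕ) :
    GeneratedBy (∀ i, Fin (n i) → G i) d ↔
      ∀ i, GeneratedBy (Fin (n i) → G i) d :=
  product_powers_generated_general G hpair n d
end

section
/- Let S be a finite simple non-abelian group. If the direct power S^n is generated by d elements, then n ≤ |S|^d. -/
/-- If the n-th direct power of a non-abelian finite simple group S is
d-generated, then n ≤ |S|^d. -/
theorem power_generated_bound {S : Type*} [Group S] [Finite S] [IsSimpleGroup S]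
    (hnonab : ¬ ∀ a b : S, a * b = b * a) (n d : ℕ)
    (hgen : GeneratedBy (Fin n → S) d) :
    n ≤ Nat.card S ^ d := by
  push_neg at hnonab
  obtain ⟨a, b, hab⟩ := hnonab
  have ha : a ≠ 1 := by rintro rfl; simp at hab
  haveI : Nontrivial S := ⟨a, 1, ha⟩
  obtain ⟨T, hTcard, hTgen⟩ := hgen
  -- enumerate T with a function from Fin d
  set l := T.toList with hl
  have hlen : l.length ≤ d := by
    rw [hl, Finset.length_toList]; exact hTcard
  set g : Fin d → (Fin n → S) := fun j => l.getD j 1 with hg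
  have hmem : ∀ t ∈ T, ∃ j : Fin d, g j = t := by
    intro t ht
    have : t ∈ l := by rw [hl]; exact Finset.mem_toList.2 ht
    obtain ⟨k, hk, hk2⟩ := List.getElem_of_mem this
    exact ⟨⟨k, lt_of_lt_of_le hk hlen⟩, by
      simp [hg, List.getD_eq_getElem?_getD, List.getElem?_eq_getElem hk, hk2]⟩
  -- the map from coordinates to d-tuples
  set φ : Fin n → (Fin d → S) := fun i j => g j i with hφ
  have hinj : Function.Injective φ := by
    intro i i' h
    by_contra hne
    have hji : ∀ j, g j i = g j i' := fun j => congrFun h j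
    let H : Subgroup (Fin n → S) :=
      MonoidHom.eqLocus (Pi.evalMonoidHom (fun _ : Fin n => S) i)
        (Pi.evalMonoidHom (fun _ : Fin n => S) i')
    have hle : Subgroup.closure (T : Set (Fin n → S)) ≤ H := by
      apply Subgroup.closure_le _ |>.2
      intro t ht
      obtain ⟨j, hj⟩ := hmem t ht
      show t i = t i'
      rw [← hj]; exact hji j
    rw [hTgen] at hle
    have hx : (Function.update (1 : Fin n → S) i a) ∈ H := hle (Subgroup.mem_top _)
    have : (Function.update (1 : Fin n → S) i a) i
        = (Function.update (1 : Fin n → S) i a) i' := hx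
    rw [Function.update_self, Function.update_of_ne (Ne.symm hne)] at this
    exact ha (this.trans rfl)
  calc n = Nat.card (Fin n) := by simp
    _ ≤ Nat.card (Fin d → S) := Nat.card_le_card_of_injective φ hinj
    _ = Nat.card S ^ d := by simp [Nat.card_fun]
end

section
/- If G is a finite group with a normal series 1 = G_0 ◁ G_1 ◁ ... ◁ G_k = G in which every factor G_{i+1}/G_i is either solvable or a direct product of non-abelian simple groups, and if G is anabelian with exactly j non-solvable factors among the G_{i+1}/G_i, then G admits a normal subgroup H such that G/H is a direct product of non-abelian finite simple groups and H has such a series with at most j−1 non-solvable factors (assuming j ≥ 1 and G non-trivial). -/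
/-- `Q` is (isomorphic to) a direct product of non-abelian simple groups. -/
def IsProdOfNonabelianSimples (Q : Type*) [Group Q] : Prop :=
  ∃ (ι : Type) (S : ι → Type) (hS : ∀ i, Group (S i)),
    letI := hS
    (∀ i, IsSimpleGroup (S i)) ∧ (∀ i, ¬ ∀ a b : S i, a * b = b * a) ∧
      Nonempty (Q ≃* ∀ i, S i)

/-- The layer `B/A` is solvable or a direct product of non-abelian simple groups. -/
def SolvableOrProdLayer {G : Type*} [Group G] (A B : Subgroup G)
    (h : A.Normal) : Prop :=
  letI : (A.subgroupOf B).Normal := h.subgroupOf B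
  IsSolvable (B ⧸ A.subgroupOf B) ∨ IsProdOfNonabelianSimples (B ⧸ A.subgroupOf B)

/-- The layer `B/A` is not solvable. -/
def NonsolvableLayer {G : Type*} [Group G] (A B : Subgroup G)
    (h : A.Normal) : Prop :=
  letI : (A.subgroupOf B).Normal := h.subgroupOf B
  ¬ IsSolvable (B ⧸ A.subgroupOf B)

/-- `G` has a normal series whose layers are each solvable or a direct product
of non-abelian simple groups, with at most `j` non-solvable layers. -/
def HasLayeredSeries (G : Type*) [Group G] (j : ℕ) : Prop :=
  ∃ (k : ℕ) (c : Fin (k + 1) → Subgroup G) (hnorm : ∀ i, (c i).Normal),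
    c 0 = ⊥ ∧ c (Fin.last k) = ⊤ ∧ (∀ i : Fin k, c i.castSucc ≤ c i.succ) ∧
    (∀ i : Fin k, SolvableOrProdLayer (c i.castSucc) (c i.succ) (hnorm _)) ∧
    Nat.card {i : Fin k //
      NonsolvableLayer (c i.castSucc) (c i.succ) (hnorm _)} ≤ j

/-!
Since `c 0 = ⊥ ≠ G = c k`, some layer has `c i.castSucc ≠ G = c i.succ`. This layer
`c i.succ / c i.castSucc ≅ G / c i.castSucc` is nontrivial, and it cannot be solvable: a simple
quotient of a nontrivial solvable section of `G` would be an abelian composition factor. Hence it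
is a product of non-abelian simple groups. Intersecting the earlier terms of the series with
`H = c i.castSucc` gives a layered series of `H` whose layers are isomorphic to the earlier layers
of `c`, so it has at least one non-solvable layer fewer.
-/

lemma Subgroup.exists_normal_isSimpleGroup_quotient (Q : Type*) [Group Q] [Finite Q]
    [Nontrivial Q] : ∃ N : Subgroup Q, ∃ _ : N.Normal, IsSimpleGroup (Q ⧸ N) := by
  obtain ⟨N, ⟨hN, hNtop⟩, hmax⟩ :=
    (Set.toFinite {N : Subgroup Q | N.Normal ∧ N ≠ ⊤}).exists_maximal
      ⟨⊥, Subgroup.normal_bot, bot_ne_top⟩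
  refine ⟨N, hN, ?_⟩
  have : Nontrivial (Q ⧸ N) := QuotientGroup.nontrivial_iff.mpr hNtop
  refine ⟨fun K hK => ?_⟩
  have hinj := Subgroup.comap_injective (QuotientGroup.mk'_surjective N)
  have hNK : N ≤ K.comap (QuotientGroup.mk' N) :=
    (QuotientGroup.ker_mk' N).ge.trans (MonoidHom.ker_le_comap _ K)
  by_cases hKtop : K.comap (QuotientGroup.mk' N) = ⊤
  · exact Or.inr (hinj (by rw [hKtop, Subgroup.comap_top]))
  · refine Or.inl (hinj ?_)
    rw [MonoidHom.comap_bot, QuotientGroup.ker_mk']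
    exact le_antisymm (hmax ⟨hK.comap _, hKtop⟩ hNK) hNK

lemma isSubnormal_top {G : Type*} [Group G] : IsSubnormal (⊤ : Subgroup G) :=
  ⟨0, fun _ => ⊤, rfl, rfl, fun i => i.elim0⟩

lemma MulEquiv.isSolvable_congr {Q R : Type*} [Group Q] [Group R] (e : Q ≃* R) :
    Group.IsSolvable Q ↔ Group.IsSolvable R :=
  ⟨fun _ => Group.isSolvable_of_surjective (f := e.toMonoidHom) e.surjective,
    fun _ => Group.isSolvable_of_surjective (f := e.symm.toMonoidHom) e.symm.surjective⟩

lemma IsAnabelian.subsingleton_quotient_of_isSolvable {G : Type*} [Group G] [Finite G]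
    (hG : IsAnabelian G) {H : Subgroup G} (hH : IsSubnormal H) (N : Subgroup H) [N.Normal]
    [Group.IsSolvable (H ⧸ N)] : Subsingleton (H ⧸ N) := by
  by_contra hnt
  rw [not_subsingleton_iff_nontrivial] at hnt
  obtain ⟨M, _, _⟩ := Subgroup.exists_normal_isSimpleGroup_quotient (H ⧸ N)
  set f : H →* (H ⧸ N) ⧸ M := (QuotientGroup.mk' M).comp (QuotientGroup.mk' N)
  have hf : Function.Surjective f :=
    (QuotientGroup.mk'_surjective M).comp (QuotientGroup.mk'_surjective N)
  let e := QuotientGroup.quotientKerEquivOfSurjective f hf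
  have : IsSimpleGroup (H ⧸ f.ker) := e.isSimpleGroup
  have : Group.IsSolvable (H ⧸ f.ker) := e.isSolvable_congr.mpr inferInstance
  exact hG H f.ker inferInstance hH inferInstance (IsSimpleGroup.comm_iff_isSolvable.mpr this)

lemma IsAnabelian.le_of_isSolvable_quotient {G : Type*} [Group G] [Finite G]
    (hG : IsAnabelian G) {A B : Subgroup G} (hB : IsSubnormal B) [(A.subgroupOf B).Normal]
    (hs : Group.IsSolvable (B ⧸ A.subgroupOf B)) : B ≤ A := by
  have := hG.subsingleton_quotient_of_isSolvable hB (A.subgroupOf B)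
  rwa [QuotientGroup.subsingleton_iff, Subgroup.subgroupOf_eq_top] at this

lemma MulEquiv.isProdOfNonabelianSimples_congr {Q R : Type*} [Group Q] [Group R] (e : Q ≃* R) :
    IsProdOfNonabelianSimples Q ↔ IsProdOfNonabelianSimples R :=
  ⟨fun ⟨ι, S, _, hsimple, hcomm, ⟨f⟩⟩ => ⟨ι, S, _, hsimple, hcomm, ⟨e.symm.trans f⟩⟩,
    fun ⟨ι, S, _, hsimple, hcomm, ⟨f⟩⟩ => ⟨ι, S, _, hsimple, hcomm, ⟨e.trans f⟩⟩⟩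

namespace Subgroup

variable {G : Type*} [Group G]

noncomputable def quotientSubgroupOfEquivOfEqTop (A : Subgroup G) [A.Normal] {B : Subgroup G}
    (hB : B = ⊤) : B ⧸ A.subgroupOf B ≃* G ⧸ A :=
  QuotientGroup.congr _ _ ((MulEquiv.subgroupCongr hB).trans topEquiv) <| by
    subst hB
    ext
    simp [mem_subgroupOf]

noncomputable def quotientSubgroupOfSubgroupOfEquiv {A B H : Subgroup G} [A.Normal]
    (hBH : B ≤ H) :
    (B.subgroupOf H) ⧸ (A.subgroupOf H).subgroupOf (B.subgroupOf H) ≃* B ⧸ A.subgroupOf B :=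
  QuotientGroup.congr _ _ (subgroupOfEquivOfLe hBH) <| by
    ext x
    simp only [mem_map, mem_subgroupOf]
    exact ⟨fun ⟨y, hy, hyx⟩ => hyx ▸ hy,
      fun hx => ⟨⟨⟨x, hBH x.2⟩, x.2⟩, hx, rfl⟩⟩

end Subgroup

lemma Fin.exists_not_castSucc_and_succ {k : ℕ} {p : Fin (k + 1) → Prop} (h0 : ¬ p 0)
    (hlast : p (Fin.last k)) : ∃ i : Fin k, ¬ p i.castSucc ∧ p i.succ := by
  by_contra! h
  exact Fin.induction h0 h (Fin.last k) hlast

section Layers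

variable {G : Type*} [Group G]

lemma solvableOrProdLayer_subgroupOf {A B H : Subgroup G} (hA : A.Normal) (hBH : B ≤ H) :
    SolvableOrProdLayer (A.subgroupOf H) (B.subgroupOf H) (hA.subgroupOf H) ↔
      SolvableOrProdLayer A B hA :=
  let e := Subgroup.quotientSubgroupOfSubgroupOfEquiv (A := A) hBH
  or_congr e.isSolvable_congr e.isProdOfNonabelianSimples_congr

lemma nonsolvableLayer_subgroupOf {A B H : Subgroup G} (hA : A.Normal) (hBH : B ≤ H) :
    NonsolvableLayer (A.subgroupOf H) (B.subgroupOf H) (hA.subgroupOf H) ↔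
      NonsolvableLayer A B hA :=
  not_congr (Subgroup.quotientSubgroupOfSubgroupOfEquiv (A := A) hBH).isSolvable_congr

lemma hasLayeredSeries_castSucc_of_nonsolvableLayer {k : ℕ} {c : Fin (k + 1) → Subgroup G}
    {hnorm : ∀ i, (c i).Normal} (h0 : c 0 = ⊥)
    (hmono : ∀ i : Fin k, c i.castSucc ≤ c i.succ)
    (hfac : ∀ i : Fin k, SolvableOrProdLayer (c i.castSucc) (c i.succ) (hnorm _))
    (i : Fin k) (hi : NonsolvableLayer (c i.castSucc) (c i.succ) (hnorm _)) :
    HasLayeredSeries (c i.castSucc)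
      (Nat.card {l : Fin k // NonsolvableLayer (c l.castSucc) (c l.succ) (hnorm _)} - 1) := by
  set H := c i.castSucc
  let ι : Fin i → Fin k := Fin.castLE i.isLt.le
  have hle (l : Fin i) : c (ι l).succ ≤ H :=
    Fin.monotone_iff_le_succ.mpr hmono (Fin.le_def.mpr (by simp [ι]))
  refine ⟨i, fun l => (c (Fin.castLE (Nat.succ_le_succ i.isLt.le) l)).subgroupOf H,
    fun _ => (hnorm _).subgroupOf H, ?_, ?_, fun l => Subgroup.comap_mono (hmono (ι l)),
    fun l => (solvableOrProdLayer_subgroupOf (hnorm _) (hle l)).mpr (hfac (ι l)), ?_⟩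
  · simp [h0]
  · exact Subgroup.subgroupOf_self H
  · apply Nat.le_sub_one_of_lt
    let f (l : {l : Fin i // NonsolvableLayer ((c (ι l).castSucc).subgroupOf H)
        ((c (ι l).succ).subgroupOf H) ((hnorm _).subgroupOf H)}) :
        {l : Fin k // NonsolvableLayer (c l.castSucc) (c l.succ) (hnorm _)} :=
      ⟨ι l.1, (nonsolvableLayer_subgroupOf (hnorm _) (hle l.1)).mp l.2⟩
    refine (Nat.card_range_of_injective (f := f) ?_).symm.trans_lt
      (Finite.card_subtype_lt (x := ⟨i, hi⟩) ?_)
    · intro l l' h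
      exact Subtype.ext (Fin.ext (by simpa [ι, f] using congrArg (Fin.val ∘ Subtype.val) h))
    · rintro ⟨l, hl⟩
      exact l.1.isLt.ne (by simpa [ι, f] using congrArg (Fin.val ∘ Subtype.val) hl)

end Layers

theorem layered_series_inductive_step_general {G : Type*} [Group G] [Finite G]
    [Nontrivial G] (hG : IsAnabelian G) (k j : ℕ)
    (c : Fin (k + 1) → Subgroup G) (hnorm : ∀ i, (c i).Normal)
    (h0 : c 0 = ⊥) (htop : c (Fin.last k) = ⊤)
    (hmono : ∀ i : Fin k, c i.castSucc ≤ c i.succ)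
    (hfac : ∀ i : Fin k, SolvableOrProdLayer (c i.castSucc) (c i.succ) (hnorm _))
    (hj : Nat.card {i : Fin k //
      NonsolvableLayer (c i.castSucc) (c i.succ) (hnorm _)} = j) :
    ∃ (H : Subgroup G) (hH : H.Normal),
      (letI := hH; IsProdOfNonabelianSimples (G ⧸ H)) ∧
      HasLayeredSeries H (j - 1) := by
  obtain ⟨i, hi_ne_top, hi_top⟩ :=
    Fin.exists_not_castSucc_and_succ (p := (c · = ⊤)) (h0 ▸ bot_ne_top) htop
  have hns : NonsolvableLayer (c i.castSucc) (c i.succ) (hnorm _) := fun hs =>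
    hi_ne_top <| top_le_iff.mp <|
      hi_top ▸ hG.le_of_isSolvable_quotient (hi_top ▸ isSubnormal_top) hs
  have := hnorm i.castSucc
  refine ⟨c i.castSucc, hnorm _, ?_,
    hj ▸ hasLayeredSeries_castSucc_of_nonsolvableLayer h0 hmono hfac i hns⟩
  exact (Subgroup.quotientSubgroupOfEquivOfEqTop _ hi_top).isProdOfNonabelianSimples_congr.mp
    ((hfac i).resolve_left hns)

/-- Inductive step: a finite anabelian group with a layered normal series with
exactly `j ≥ 1` non-solvable layers has a normal subgroup `H` with `G/H` a
direct product of non-abelian finite simple groups and `H` admitting a layered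
series with at most `j - 1` non-solvable layers. -/
theorem layered_series_inductive_step {G : Type*} [Group G] [Finite G]
    [Nontrivial G] (hG : IsAnabelian G) (k j : ℕ)
    (c : Fin (k + 1) → Subgroup G) (hnorm : ∀ i, (c i).Normal)
    (h0 : c 0 = ⊥) (htop : c (Fin.last k) = ⊤)
    (hmono : ∀ i : Fin k, c i.castSucc ≤ c i.succ)
    (hfac : ∀ i : Fin k, SolvableOrProdLayer (c i.castSucc) (c i.succ) (hnorm _))
    (hj : Nat.card {i : Fin k //
      NonsolvableLayer (c i.castSucc) (c i.succ) (hnorm _)} = j)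
    (hj1 : 1 ≤ j) :
    ∃ (H : Subgroup G) (hH : H.Normal),
      (letI := hH; IsProdOfNonabelianSimples (G ⧸ H)) ∧
      HasLayeredSeries H (j - 1) :=
  layered_series_inductive_step_general hG k j c hnorm h0 htop hmono hfac hj
end
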